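/- arXiv:2306.11819 — 5 statements merged into one kernel-verified Lean document; each statement's English description precedes it below -/
import Mathlib

section
/- Let Φ : ℝ^d → ℝ ∪ {+∞} be lower semi-continuous and convex, and define MA(Φ) as the pushforward of Lebesgue measure on the interior of {Φ* < +∞} under the almost-everywhere defined gradient map ∂Φ*. Then for every Borel measurable set A ⊆ ℝ^d, MA(Φ)(A) equals the Lebesgue measure of the subgradient image ∂Φ(A). -/
open MeasureTheory

/-- The Legendre transform of an `EReal`-valued function on `ℝ^d`. -/
noncomputable def legendre {d : ℕ} (f : EuclideanSpace ℝ (Fin d) → EReal) :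
    EuclideanSpace ℝ (Fin d) → EReal :=
  fun y => ⨆ x : EuclideanSpace ℝ (Fin d), ((inner ℝ x y : ℝ) : EReal) - f x

/-- The (multivalued) subgradient: `y ∈ ∂f(x)` iff `f x' ≥ f x + ⟨x' - x, y⟩` for all `x'`. -/
def subgrad {d : ℕ} (f : EuclideanSpace ℝ (Fin d) → EReal)
    (x : EuclideanSpace ℝ (Fin d)) : Set (EuclideanSpace ℝ (Fin d)) :=
  {y | ∀ x', f x + ((inner ℝ (x' - x) y : ℝ) : EReal) ≤ f x'}

namespace MAProof

open Set Metric Topology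

variable {d : ℕ} {Φ : EuclideanSpace ℝ (Fin d) → EReal}

lemma fy (x y : EuclideanSpace ℝ (Fin d)) :
    ((inner ℝ x y : ℝ) : EReal) - Φ x ≤ legendre Φ y :=
  le_iSup (fun x => ((inner ℝ x y : ℝ) : EReal) - Φ x) x

lemma le_of_legendre_le {y : EuclideanSpace ℝ (Fin d)} {M : ℝ}
    (h : legendre Φ y ≤ (M : EReal))
    {x : EuclideanSpace ℝ (Fin d)} {r : ℝ} (hx : Φ x = (r : EReal)) :
    (inner ℝ x y : ℝ) - r ≤ M := by
  have h2 := (fy (Φ := Φ) x y).trans h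
  rw [hx, ← EReal.coe_sub, EReal.coe_le_coe_iff] at h2
  exact h2

lemma legendre_le (hbot : ∀ x, Φ x ≠ ⊥) {y : EuclideanSpace ℝ (Fin d)} {M : ℝ}
    (h : ∀ (x : EuclideanSpace ℝ (Fin d)) (r : ℝ), Φ x = (r : EReal) → (inner ℝ x y : ℝ) - r ≤ M) :
    legendre Φ y ≤ (M : EReal) := by
  refine iSup_le fun x => ?_
  by_cases hx : Φ x = ⊤
  · rw [hx, EReal.sub_top]; exact bot_le
  · have hr : Φ x = ((Φ x).toReal : EReal) := (EReal.coe_toReal hx (hbot x)).symm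
    rw [hr, ← EReal.coe_sub, EReal.coe_le_coe_iff]
    exact_mod_cast h x _ hr

lemma legendre_ne_bot (hbot : ∀ x, Φ x ≠ ⊥) (hproper : ∃ x, Φ x ≠ ⊤)
    (y : EuclideanSpace ℝ (Fin d)) : legendre Φ y ≠ ⊥ := by
  obtain ⟨x₀, hx₀⟩ := hproper
  intro h
  have h2 := fy (Φ := Φ) x₀ y
  rw [h, le_bot_iff, (EReal.coe_toReal hx₀ (hbot x₀)).symm, ← EReal.coe_sub] at h2
  exact EReal.coe_ne_bot _ h2

lemma epigraph_closed (hlsc : LowerSemicontinuous Φ) :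
    IsClosed {p : EuclideanSpace ℝ (Fin d) × ℝ | Φ p.1 ≤ (p.2 : EReal)} := by
  rw [← isOpen_compl_iff, isOpen_iff_mem_nhds]
  rintro ⟨p, t⟩ hp
  simp only [mem_compl_iff, mem_setOf_eq, not_le] at hp
  obtain ⟨c, htc, hcΦ⟩ := exists_between hp
  have hcbot : c ≠ ⊥ := fun h => by rw [h] at htc; exact (not_lt_bot htc)
  have hctop : c ≠ ⊤ := fun h => by rw [h] at hcΦ; exact (not_top_lt hcΦ)
  have hc : (c.toReal : EReal) = c := EReal.coe_toReal hctop hcbot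
  have h1 : {x | c < Φ x} ∈ 𝓝 p := hlsc p c hcΦ
  have h2 : Iio c.toReal ∈ 𝓝 t := Iio_mem_nhds (by rw [← EReal.coe_lt_coe_iff, hc]; exact htc)
  rw [nhds_prod_eq]
  filter_upwards [Filter.prod_mem_prod h1 h2]
  rintro ⟨q, s⟩ ⟨hq, hs⟩
  simp only [mem_compl_iff, mem_setOf_eq, not_le]
  calc ((s : ℝ) : EReal) < (c.toReal : EReal) := EReal.coe_lt_coe_iff.2 hs
    _ = c := hc
    _ < Φ q := hq



lemma subgrad_easy (hbot : ∀ x, Φ x ≠ ⊥) (hproper : ∃ x, Φ x ≠ ⊤)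
    {x y : EuclideanSpace ℝ (Fin d)} (h : y ∈ subgrad Φ x) :
    ∃ r : ℝ, Φ x = (r : EReal) ∧ legendre Φ y ≤ (((inner ℝ x y : ℝ) - r : ℝ) : EReal) := by
  have hxt : Φ x ≠ ⊤ := by
    intro htop
    obtain ⟨x₀, hx₀⟩ := hproper
    have h2 := h x₀
    rw [htop, EReal.top_add_coe] at h2
    exact hx₀ (top_le_iff.1 h2)
  have hr : Φ x = ((Φ x).toReal : EReal) := (EReal.coe_toReal hxt (hbot x)).symm
  refine ⟨(Φ x).toReal, hr, ?_⟩
  apply legendre_le hbot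
  intro p ρ hp
  have h2 := h p
  rw [hp, hr, ← EReal.coe_add, EReal.coe_le_coe_iff] at h2
  have hsub : (inner ℝ (p - x) y : ℝ) = (inner ℝ p y : ℝ) - (inner ℝ x y : ℝ) :=
    inner_sub_left _ _ _
  linarith

/-- If `Φ* y` is finite and `x ∈ ∂Φ*(y)` then `y ∈ ∂Φ(x)` (Fenchel–Moreau at a point). -/
lemma subgrad_hard (hlsc : LowerSemicontinuous Φ)
    (hconv : Convex ℝ {p : EuclideanSpace ℝ (Fin d) × ℝ | Φ p.1 ≤ (p.2 : EReal)})
    (hbot : ∀ x, Φ x ≠ ⊥) (hproper : ∃ x, Φ x ≠ ⊤)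
    {x y : EuclideanSpace ℝ (Fin d)} {c₀ : ℝ} (hy : legendre Φ y = (c₀ : EReal))
    (hx : x ∈ subgrad (legendre Φ) y) : y ∈ subgrad Φ x := by
  obtain ⟨x₀, hx₀⟩ := hproper
  have hr₀ : Φ x₀ = (((Φ x₀).toReal : ℝ) : EReal) := (EReal.coe_toReal hx₀ (hbot x₀)).symm
  set r₀ : ℝ := (Φ x₀).toReal
  have key : Φ x ≤ (((inner ℝ x y : ℝ) - c₀ : ℝ) : EReal) := by
    by_contra hkey
    rw [not_le] at hkey
    set c : ℝ := (inner ℝ x y : ℝ) - c₀ with hcdef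
    have hmem : (x, c) ∉ {p : EuclideanSpace ℝ (Fin d) × ℝ | Φ p.1 ≤ (p.2 : EReal)} := by
      simp only [mem_setOf_eq, not_le]
      exact hkey
    obtain ⟨F, u, hFK, hFx⟩ :=
      geometric_hahn_banach_closed_point hconv (epigraph_closed hlsc) hmem
    set θ : EuclideanSpace ℝ (Fin d) →L[ℝ] ℝ :=
      F.comp (ContinuousLinearMap.inl ℝ (EuclideanSpace ℝ (Fin d)) ℝ) with hθdef
    set s₀ : ℝ := F (0, 1) with hs₀def
    have hF : ∀ (p : EuclideanSpace ℝ (Fin d)) (t : ℝ), F (p, t) = θ p + t * s₀ := by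
      intro p t
      have hsplit : ((p, t) : EuclideanSpace ℝ (Fin d) × ℝ)
          = (p, 0) + t • ((0 : EuclideanSpace ℝ (Fin d)), (1 : ℝ)) := by
        simp [Prod.ext_iff]
      rw [hsplit, map_add, F.map_smul, smul_eq_mul]
      rfl
    have hK : ∀ (p : EuclideanSpace ℝ (Fin d)) (r : ℝ), Φ p = (r : EReal) →
        θ p + r * s₀ < u := by
      intro p r hp
      have := hFK (p, r) (by simp only [mem_setOf_eq, hp]; exact le_refl _)
      rwa [hF] at this
    have hs₀ : s₀ ≤ 0 := by
      by_contra hpos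
      push_neg at hpos
      set t : ℝ := max r₀ ((u - θ x₀ + 1) / s₀) with htdef
      have h1 : θ x₀ + t * s₀ < u := by
        have hmemt : (x₀, t) ∈ {p : EuclideanSpace ℝ (Fin d) × ℝ | Φ p.1 ≤ (p.2 : EReal)} := by
          simp only [mem_setOf_eq]
          rw [hr₀]
          exact EReal.coe_le_coe_iff.2 (le_max_left _ _)
        have := hFK (x₀, t) hmemt
        rwa [hF] at this
      have h2 : (u - θ x₀ + 1) / s₀ ≤ t := le_max_right _ _
      rw [div_le_iff₀ hpos] at h2
      nlinarith
    have hfx : u < θ x + c * s₀ := by rw [← hF]; exact hFx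
    set y₀ : EuclideanSpace ℝ (Fin d) :=
      (InnerProductSpace.toDual ℝ (EuclideanSpace ℝ (Fin d))).symm θ with hy₀def
    have hy₀p : ∀ p : EuclideanSpace ℝ (Fin d), (inner ℝ y₀ p : ℝ) = θ p := fun p =>
      InnerProductSpace.toDual_symm_apply
    rcases lt_or_eq_of_le hs₀ with hneg | hzero
    · -- s₀ < 0
      set β : ℝ := -s₀ with hβdef
      have hβpos : 0 < β := by simp only [hβdef]; linarith
      set w : EuclideanSpace ℝ (Fin d) := β⁻¹ • y₀ with hwdef
      have hw : ∀ p : EuclideanSpace ℝ (Fin d), (inner ℝ p w : ℝ) = β⁻¹ * θ p := by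
        intro p
        rw [hwdef, real_inner_smul_right, real_inner_comm y₀ p, hy₀p]
      have hlw : legendre Φ w ≤ ((u / β : ℝ) : EReal) := by
        apply legendre_le hbot
        intro p r hp
        have h3 := hK p r hp
        rw [hw]
        have h4 : θ p - r * β < u := by
          have : r * s₀ = -(r * β) := by rw [hβdef]; ring
          linarith
        have h5 : (θ p - r * β) / β < u / β := (div_lt_div_iff_of_pos_right hβpos).2 h4
        have h6 : (θ p - r * β) / β = β⁻¹ * θ p - r := by field_simp
        linarith
      have h7 := hx w
      rw [hy, ← EReal.coe_add] at h7
      have h8 := h7.trans hlw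
      rw [EReal.coe_le_coe_iff] at h8
      -- h8 : c₀ + ⟪w - y, x⟫ ≤ u / β
      have hwx : (inner ℝ w x : ℝ) = β⁻¹ * θ x := by
        rw [hwdef, real_inner_smul_left, hy₀p]
      have h9 : (inner ℝ (w - y) x : ℝ) = β⁻¹ * θ x - (inner ℝ x y : ℝ) := by
        rw [inner_sub_left, hwx, real_inner_comm x y]
      rw [h9, le_div_iff₀ hβpos] at h8
      have h10 : β⁻¹ * θ x * β = θ x := by field_simp
      have h11 : c * s₀ = -(c * β) := by rw [hβdef]; ring
      rw [hcdef] at h11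
      nlinarith
    · -- s₀ = 0
      have hlw : legendre Φ (y + y₀) ≤ ((c₀ + u : ℝ) : EReal) := by
        apply legendre_le hbot
        intro p r hp
        have h3 := hK p r hp
        rw [hzero, mul_zero, add_zero] at h3
        have h4 : (inner ℝ p y : ℝ) - r ≤ c₀ := le_of_legendre_le hy.le hp
        have h5 : (inner ℝ p (y + y₀) : ℝ) = (inner ℝ p y : ℝ) + (inner ℝ p y₀ : ℝ) :=
          inner_add_right _ _ _
        rw [real_inner_comm y₀ p, hy₀p] at h5
        linarith
      have h7 := hx (y + y₀)
      rw [hy, ← EReal.coe_add] at h7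
      have h8 := h7.trans hlw
      rw [EReal.coe_le_coe_iff] at h8
      have h9 : y + y₀ - y = y₀ := by abel
      rw [h9, hy₀p] at h8
      have h10 : c * s₀ = 0 := by rw [hzero, mul_zero]
      linarith
  -- conclude
  intro x'
  have hxt : Φ x ≠ ⊤ := by
    intro h
    rw [h, top_le_iff] at key
    exact EReal.coe_ne_top _ key
  have hr : Φ x = (((Φ x).toReal : ℝ) : EReal) := (EReal.coe_toReal hxt (hbot x)).symm
  set r : ℝ := (Φ x).toReal
  have hrle : r ≤ (inner ℝ x y : ℝ) - c₀ := by
    rw [hr] at key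
    exact EReal.coe_le_coe_iff.1 key
  by_cases hx' : Φ x' = ⊤
  · rw [hx']; exact le_top
  · have hr' : Φ x' = (((Φ x').toReal : ℝ) : EReal) := (EReal.coe_toReal hx' (hbot x')).symm
    set r' : ℝ := (Φ x').toReal
    have hfy : (inner ℝ x' y : ℝ) - r' ≤ c₀ := le_of_legendre_le hy.le hr'
    rw [hr, hr', ← EReal.coe_add, EReal.coe_le_coe_iff]
    have hsub : (inner ℝ (x' - x) y : ℝ) = (inner ℝ x' y : ℝ) - (inner ℝ x y : ℝ) :=
      inner_sub_left _ _ _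
    linarith



/-- The domain of the Legendre transform is convex. -/
lemma domain_convex (hbot : ∀ x, Φ x ≠ ⊥) (hproper : ∃ x, Φ x ≠ ⊤) :
    Convex ℝ {y : EuclideanSpace ℝ (Fin d) | legendre Φ y ≠ ⊤} := by
  intro y₁ h₁ y₂ h₂ a b ha hb hab
  simp only [mem_setOf_eq] at h₁ h₂ ⊢
  have hc₁ : legendre Φ y₁ = (((legendre Φ y₁).toReal : ℝ) : EReal) :=
    (EReal.coe_toReal h₁ (legendre_ne_bot hbot hproper y₁)).symm
  have hc₂ : legendre Φ y₂ = (((legendre Φ y₂).toReal : ℝ) : EReal) :=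
    (EReal.coe_toReal h₂ (legendre_ne_bot hbot hproper y₂)).symm
  set c₁ : ℝ := (legendre Φ y₁).toReal
  set c₂ : ℝ := (legendre Φ y₂).toReal
  have hle : legendre Φ (a • y₁ + b • y₂) ≤ ((a * c₁ + b * c₂ : ℝ) : EReal) := by
    apply legendre_le hbot
    intro p r hp
    have e1 : (inner ℝ p y₁ : ℝ) - r ≤ c₁ := le_of_legendre_le hc₁.le hp
    have e2 : (inner ℝ p y₂ : ℝ) - r ≤ c₂ := le_of_legendre_le hc₂.le hp
    have hinner : (inner ℝ p (a • y₁ + b • y₂) : ℝ)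
        = a * (inner ℝ p y₁ : ℝ) + b * (inner ℝ p y₂ : ℝ) := by
      rw [inner_add_right, real_inner_smul_right, real_inner_smul_right]
    have e3 : a * ((inner ℝ p y₁ : ℝ) - r) ≤ a * c₁ := mul_le_mul_of_nonneg_left e1 ha
    have e4 : b * ((inner ℝ p y₂ : ℝ) - r) ≤ b * c₂ := mul_le_mul_of_nonneg_left e2 hb
    rw [hinner]
    have hr1 : a * ((inner ℝ p y₁ : ℝ) - r) + b * ((inner ℝ p y₂ : ℝ) - r)
        = a * (inner ℝ p y₁ : ℝ) + b * (inner ℝ p y₂ : ℝ) - (a + b) * r := by ring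
    rw [hab, one_mul] at hr1
    linarith
  exact fun h => EReal.coe_ne_top _ (h ▸ hle.antisymm (h ▸ le_top)).symm

/-- `toReal ∘ legendre Φ` is convex on any convex subset of the domain. -/
lemma convexOn_toReal_legendre (hbot : ∀ x, Φ x ≠ ⊥) (hproper : ∃ x, Φ x ≠ ⊤)
    {S : Set (EuclideanSpace ℝ (Fin d))} (hSc : Convex ℝ S)
    (hSD : ∀ y ∈ S, legendre Φ y ≠ ⊤) :
    ConvexOn ℝ S (fun y => (legendre Φ y).toReal) := by
  refine ⟨hSc, ?_⟩
  intro y₁ h₁ y₂ h₂ a b ha hb hab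
  have hc₁ : legendre Φ y₁ = (((legendre Φ y₁).toReal : ℝ) : EReal) :=
    (EReal.coe_toReal (hSD y₁ h₁) (legendre_ne_bot hbot hproper y₁)).symm
  have hc₂ : legendre Φ y₂ = (((legendre Φ y₂).toReal : ℝ) : EReal) :=
    (EReal.coe_toReal (hSD y₂ h₂) (legendre_ne_bot hbot hproper y₂)).symm
  set c₁ : ℝ := (legendre Φ y₁).toReal
  set c₂ : ℝ := (legendre Φ y₂).toReal
  have hle : legendre Φ (a • y₁ + b • y₂) ≤ ((a * c₁ + b * c₂ : ℝ) : EReal) := by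
    apply legendre_le hbot
    intro p r hp
    have e1 : (inner ℝ p y₁ : ℝ) - r ≤ c₁ := le_of_legendre_le hc₁.le hp
    have e2 : (inner ℝ p y₂ : ℝ) - r ≤ c₂ := le_of_legendre_le hc₂.le hp
    have hinner : (inner ℝ p (a • y₁ + b • y₂) : ℝ)
        = a * (inner ℝ p y₁ : ℝ) + b * (inner ℝ p y₂ : ℝ) := by
      rw [inner_add_right, real_inner_smul_right, real_inner_smul_right]
    have e3 : a * ((inner ℝ p y₁ : ℝ) - r) ≤ a * c₁ := mul_le_mul_of_nonneg_left e1 ha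
    have e4 : b * ((inner ℝ p y₂ : ℝ) - r) ≤ b * c₂ := mul_le_mul_of_nonneg_left e2 hb
    rw [hinner]
    have hr1 : a * ((inner ℝ p y₁ : ℝ) - r) + b * ((inner ℝ p y₂ : ℝ) - r)
        = a * (inner ℝ p y₁ : ℝ) + b * (inner ℝ p y₂ : ℝ) - (a + b) * r := by ring
    rw [hab, one_mul] at hr1
    linarith
  have := EReal.toReal_le_toReal hle
    (legendre_ne_bot hbot hproper _) (EReal.coe_ne_top _)
  rwa [EReal.toReal_coe] at this
  -- smul in goal vs here: ConvexOn unfolds to a • f y₁ + b • f y₂; smul_eq_mul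

/-- A subgradient of the Legendre transform at a point of differentiability
agrees with the derivative. -/
lemma subgrad_legendre_eq_fderiv {f : EuclideanSpace ℝ (Fin d) → ℝ}
    {S : Set (EuclideanSpace ℝ (Fin d))} (hSo : IsOpen S)
    {y : EuclideanSpace ℝ (Fin d)} (hyS : y ∈ S)
    (hfS : ∀ z ∈ S, legendre Φ z = ((f z : ℝ) : EReal))
    (hdiff : DifferentiableAt ℝ f y) {x : EuclideanSpace ℝ (Fin d)}
    (hx : x ∈ subgrad (legendre Φ) y) :
    ∀ v, (inner ℝ x v : ℝ) = fderiv ℝ f y v := by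
  have hge : ∀ z ∈ S, f y + (inner ℝ (z - y) x : ℝ) ≤ f z := by
    intro z hz
    have h2 := hx z
    rw [hfS y hyS, hfS z hz, ← EReal.coe_add, EReal.coe_le_coe_iff] at h2
    exact h2
  set h : EuclideanSpace ℝ (Fin d) → ℝ :=
    fun z => f z - f y - (inner ℝ (z - y) x : ℝ) with hhdef
  have hmin : IsLocalMin h y := by
    filter_upwards [hSo.mem_nhds hyS] with z hz
    have h2 := hge z hz
    have hy0 : h y = 0 := by simp [hhdef]
    have hz0 : (0 : ℝ) ≤ h z := by simp only [hhdef]; linarith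
    rw [hy0]
    exact hz0
  have h2 : HasFDerivAt (fun z : EuclideanSpace ℝ (Fin d) => (inner ℝ (z - y) x : ℝ))
      (innerSL ℝ x) y := by
    have heq : (fun z : EuclideanSpace ℝ (Fin d) => (inner ℝ (z - y) x : ℝ))
        = fun z => (innerSL ℝ x) z - (inner ℝ x y : ℝ) := by
      funext z
      simp only [innerSL_apply_apply]
      rw [inner_sub_left, real_inner_comm x z, real_inner_comm x y]
    rw [heq]
    exact ((innerSL ℝ x).hasFDerivAt).sub_const _
  have hder : HasFDerivAt h (fderiv ℝ f y - innerSL ℝ x) y :=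
    (hdiff.hasFDerivAt.sub_const (f y)).sub h2
  have hzero := hmin.hasFDerivAt_eq_zero hder
  intro v
  have hv := congrFun (congrArg DFunLike.coe hzero) v
  simp only [ContinuousLinearMap.sub_apply, ContinuousLinearMap.zero_apply,
    innerSL_apply_apply, sub_eq_zero] at hv
  exact hv.symm



lemma ae_diff_on_open {f : EuclideanSpace ℝ (Fin d) → ℝ}
    {S : Set (EuclideanSpace ℝ (Fin d))}
    (hSo : IsOpen S) (hlip : LocallyLipschitzOn S f) :
    ∀ᵐ y ∂(volume : Measure (EuclideanSpace ℝ (Fin d))), y ∈ S → DifferentiableAt ℝ f y := by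
  rw [ae_iff]
  have hset : {y | ¬ (y ∈ S → DifferentiableAt ℝ f y)}
      = {y | y ∈ S ∧ ¬ DifferentiableAt ℝ f y} := by
    ext y; simp [Classical.not_imp]
  rw [hset]
  apply measure_null_of_locally_null
  intro y hy
  obtain ⟨K, t, ht, hK⟩ := hlip hy.1
  rw [hSo.nhdsWithin_eq hy.1] at ht
  have hts : t ∩ S ∈ 𝓝 y := Filter.inter_mem ht (hSo.mem_nhds hy.1)
  obtain ⟨ε, hε, hball⟩ := Metric.mem_nhds_iff.1 hts
  refine ⟨ball y ε ∩ {y | y ∈ S ∧ ¬ DifferentiableAt ℝ f y}, ?_, ?_⟩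
  · exact Filter.inter_mem (mem_nhdsWithin_of_mem_nhds (ball_mem_nhds y hε))
      self_mem_nhdsWithin
  · have hlipball : LipschitzOnWith K f (ball y ε) :=
      hK.mono (hball.trans inter_subset_left)
    have hae := hlipball.ae_differentiableWithinAt_of_mem
      (μ := (volume : Measure (EuclideanSpace ℝ (Fin d))))
    have hsub : ball y ε ∩ {y | y ∈ S ∧ ¬ DifferentiableAt ℝ f y}
        ⊆ {z | ¬ (z ∈ ball y ε → DifferentiableWithinAt ℝ f (ball y ε) z)} := by
      rintro z ⟨hzb, _, hznd⟩
      simp only [mem_setOf_eq, Classical.not_imp]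
      exact ⟨hzb, fun hd => hznd (hd.differentiableAt (isOpen_ball.mem_nhds hzb))⟩
    exact measure_mono_null hsub (ae_iff.1 hae)

end MAProof

/-- Let `Φ : ℝ^d → ℝ ∪ {+∞}` be lsc and convex, and let `MA(Φ)` be the pushforward of
Lebesgue measure on the interior `S` of `{Φ* < +∞}` under the almost-everywhere defined
gradient map `∂Φ*` (recorded as a measurable selection `g` with `g y ∈ ∂Φ*(y)` for a.e.
`y ∈ S`). Then for every Borel set `A ⊆ ℝ^d`, `MA(Φ)(A)` equals the Lebesgue measure of
the subgradient image `∂Φ(A)`. -/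
theorem MA_pushforward_eq_subgradImage_volume {d : ℕ}
    (Φ : EuclideanSpace ℝ (Fin d) → EReal)
    (hlsc : LowerSemicontinuous Φ)
    (hconv : Convex ℝ {p : EuclideanSpace ℝ (Fin d) × ℝ | Φ p.1 ≤ (p.2 : EReal)})
    (hbot : ∀ x, Φ x ≠ ⊥) (hproper : ∃ x, Φ x ≠ ⊤)
    (S : Set (EuclideanSpace ℝ (Fin d)))
    (hS : S = interior {y | legendre Φ y ≠ ⊤})
    (g : EuclideanSpace ℝ (Fin d) → EuclideanSpace ℝ (Fin d))
    (hgmeas : Measurable g)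
    (hgsel : ∀ᵐ y ∂(volume.restrict S), g y ∈ subgrad (legendre Φ) y) :
    ∀ A : Set (EuclideanSpace ℝ (Fin d)), MeasurableSet A →
      Measure.map g (volume.restrict S) A = volume (⋃ x ∈ A, subgrad Φ x) := by
  intro A hA
  set D : Set (EuclideanSpace ℝ (Fin d)) := {y | legendre Φ y ≠ ⊤} with hD
  have hSo : IsOpen S := hS ▸ isOpen_interior
  have hSm : MeasurableSet S := hSo.measurableSet
  have hSD : ∀ y ∈ S, legendre Φ y ≠ ⊤ := by
    intro y hy
    rw [hS] at hy
    exact interior_subset hy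
  set f : EuclideanSpace ℝ (Fin d) → ℝ := fun y => (legendre Φ y).toReal with hf
  have hfS : ∀ z ∈ S, legendre Φ z = ((f z : ℝ) : EReal) := fun z hz =>
    (EReal.coe_toReal (hSD z hz) (MAProof.legendre_ne_bot hbot hproper z)).symm
  have hDconv : Convex ℝ D := MAProof.domain_convex hbot hproper
  have hSconv : Convex ℝ S := hS ▸ hDconv.interior
  have hconvf : ConvexOn ℝ S f :=
    MAProof.convexOn_toReal_legendre hbot hproper hSconv hSD
  have hlip : LocallyLipschitzOn S f := hconvf.locallyLipschitzOn hSo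
  have hdiff := MAProof.ae_diff_on_open hSo hlip
  have hsel : ∀ᵐ y ∂(volume : Measure (EuclideanSpace ℝ (Fin d))),
      y ∈ S → g y ∈ subgrad (legendre Φ) y := (ae_restrict_iff' hSm).1 hgsel
  have hfr : ∀ᵐ y ∂(volume : Measure (EuclideanSpace ℝ (Fin d))), y ∉ frontier D := by
    rw [ae_iff]
    simpa [not_not] using hDconv.addHaar_frontier
      (volume : Measure (EuclideanSpace ℝ (Fin d)))
  rw [Measure.map_apply hgmeas hA, Measure.restrict_apply (hgmeas hA)]
  apply measure_congr
  rw [Filter.eventuallyEq_set]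
  filter_upwards [hdiff, hsel, hfr] with y h1 h2 h3
  constructor
  · rintro ⟨hyA, hyS⟩
    have hy : legendre Φ y = ((f y : ℝ) : EReal) := hfS y hyS
    have hsub := MAProof.subgrad_hard hlsc hconv hbot hproper hy (h2 hyS)
    exact Set.mem_iUnion₂.2 ⟨g y, hyA, hsub⟩
  · intro hyT
    obtain ⟨x, hxA, hyx⟩ := Set.mem_iUnion₂.1 hyT
    obtain ⟨r, hr, hle⟩ := MAProof.subgrad_easy hbot hproper hyx
    have hyD : y ∈ D := by
      intro htop
      rw [htop, top_le_iff] at hle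
      exact EReal.coe_ne_top _ hle
    have hyS : y ∈ S := by
      rw [hS]
      by_contra hni
      exact h3 ⟨subset_closure hyD, hni⟩
    have hy : legendre Φ y = ((f y : ℝ) : EReal) := hfS y hyS
    have hc₀ : (f y : ℝ) ≤ (inner ℝ x y : ℝ) - r := by
      rw [hy] at hle
      exact EReal.coe_le_coe_iff.1 hle
    have hxsub : x ∈ subgrad (legendre Φ) y := by
      intro y'
      rw [hy, ← EReal.coe_add]
      have hfyr := MAProof.fy (Φ := Φ) x y'
      rw [hr, ← EReal.coe_sub] at hfyr
      refine le_trans ?_ hfyr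
      rw [EReal.coe_le_coe_iff]
      have hsub : (inner ℝ (y' - y) x : ℝ) = (inner ℝ y' x : ℝ) - (inner ℝ y x : ℝ) :=
        inner_sub_left _ _ _
      have hc1 : (inner ℝ y x : ℝ) = (inner ℝ x y : ℝ) := real_inner_comm x y
      have hc2 : (inner ℝ y' x : ℝ) = (inner ℝ x y' : ℝ) := real_inner_comm x y'
      linarith
    have e1 := MAProof.subgrad_legendre_eq_fderiv hSo hyS hfS (h1 hyS) hxsub
    have e2 := MAProof.subgrad_legendre_eq_fderiv hSo hyS hfS (h1 hyS) (h2 hyS)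
    have hxg : x = g y := ext_inner_right ℝ (fun v => (e1 v).trans (e2 v).symm)
    exact ⟨by rw [Set.mem_preimage, ← hxg]; exact hxA, hyS⟩
end

section
/- Assume strong duality max J = min I holds for an optimal transport problem with cost c, and let Φ be a maximizer of J. Then a coupling γ of μ and ν is an optimal transport plan if and only if γ is supported on the set {(x,y) ∈ X × Y : Φ(x) + Φ^c(y) = −c(x,y)}. -/
open MeasureTheory

/-- Assume strong duality `max J = min I` holds and `Φ` is a maximizer of the dual
functional `J`. Then a coupling `γ` of `μ` and `ν` is an optimal transport plan if and
only if `γ` is supported on `{(x,y) : Φ(x) + Φ^c(y) = −c(x,y)}`. -/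
theorem ot_optimal_iff_supported_on_equality_set
    {X Y : Type*} [MetricSpace X] [PolishSpace X] [MeasurableSpace X] [BorelSpace X]
    [MetricSpace Y] [PolishSpace Y] [MeasurableSpace Y] [BorelSpace Y] [Nonempty X]
    (μ : Measure X) (ν : Measure Y) [IsProbabilityMeasure μ] [IsProbabilityMeasure ν]
    (c : X × Y → ℝ) (hc : Continuous c) (hcb : BddBelow (Set.range c))
    (Φ : X → ℝ) (hΦmeas : Measurable Φ) (hΦ : Integrable Φ μ)
    (Φc : Y → ℝ) (hΦcmeas : Measurable Φc)
    (hbdd : ∀ y, BddAbove (Set.range fun x => -c (x, y) - Φ x))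
    (hΦc : ∀ y, Φc y = ⨆ x, (-c (x, y) - Φ x))
    (hΦcInt : Integrable Φc ν)
    (hIntAll : ∀ γ' : Measure (X × Y), IsProbabilityMeasure γ' →
      γ'.map Prod.fst = μ → γ'.map Prod.snd = ν → Integrable c γ')
    -- strong duality together with maximality of `Φ`: `J(Φ) = min I`
    (hstrong : IsGLB {r : ℝ | ∃ γ' : Measure (X × Y), IsProbabilityMeasure γ' ∧
        γ'.map Prod.fst = μ ∧ γ'.map Prod.snd = ν ∧ r = ∫ p, c p ∂γ'}
      (-∫ x, Φ x ∂μ - ∫ y, Φc y ∂ν))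
    (γ : Measure (X × Y)) [IsProbabilityMeasure γ]
    (hγ1 : γ.map Prod.fst = μ) (hγ2 : γ.map Prod.snd = ν) :
    (∀ γ' : Measure (X × Y), IsProbabilityMeasure γ' →
        γ'.map Prod.fst = μ → γ'.map Prod.snd = ν →
        ∫ p, c p ∂γ ≤ ∫ p, c p ∂γ') ↔
      γ {p : X × Y | Φ p.1 + Φc p.2 = -c p} = 1 := by
  set J : ℝ := -∫ x, Φ x ∂μ - ∫ y, Φc y ∂ν with hJ
  -- pointwise inequality: Φc y ≥ -c(x,y) - Φ x
  have hpt : ∀ p : X × Y, 0 ≤ c p + Φ p.1 + Φc p.2 := by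
    intro p
    have := le_ciSup (hbdd p.2) p.1
    rw [← hΦc p.2] at this
    linarith
  set f : X × Y → ℝ := fun p => c p + Φ p.1 + Φc p.2 with hf
  -- integrability on γ
  have hcint : Integrable c γ := hIntAll γ inferInstance hγ1 hγ2
  have hΦfst : Integrable (fun p : X × Y => Φ p.1) γ := by
    have : Integrable Φ (γ.map Prod.fst) := hγ1 ▸ hΦ
    exact (integrable_map_measure hΦmeas.aestronglyMeasurable
      measurable_fst.aemeasurable).mp this
  have hΦcsnd : Integrable (fun p : X × Y => Φc p.2) γ := by
    have : Integrable Φc (γ.map Prod.snd) := hγ2 ▸ hΦcInt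
    exact (integrable_map_measure hΦcmeas.aestronglyMeasurable
      measurable_snd.aemeasurable).mp this
  have hfint : Integrable f γ := (hcint.add hΦfst).add hΦcsnd
  have hΦeq : ∫ p, Φ p.1 ∂γ = ∫ x, Φ x ∂μ := by
    rw [← hγ1, integral_map measurable_fst.aemeasurable hΦmeas.aestronglyMeasurable]
  have hΦceq : ∫ p, Φc p.2 ∂γ = ∫ y, Φc y ∂ν := by
    rw [← hγ2, integral_map measurable_snd.aemeasurable hΦcmeas.aestronglyMeasurable]
  have hfeq : ∫ p, f p ∂γ = ∫ p, c p ∂γ - J := by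
    have h1 : Integrable (fun p : X × Y => c p + Φ p.1) γ := hcint.add hΦfst
    have : ∫ p, f p ∂γ = ∫ p, c p ∂γ + ∫ p, Φ p.1 ∂γ + ∫ p, Φc p.2 ∂γ := by
      rw [show ∫ p, f p ∂γ = ∫ p, ((fun q : X × Y => c q + Φ q.1) p + Φc p.2) ∂γ from rfl,
        integral_add h1 hΦcsnd, integral_add hcint hΦfst]
    rw [this, hΦeq, hΦceq, hJ]; ring
  have hJle : J ≤ ∫ p, c p ∂γ := hstrong.1 ⟨γ, inferInstance, hγ1, hγ2, rfl⟩
  -- the equality set is measurable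
  have hset : MeasurableSet {p : X × Y | Φ p.1 + Φc p.2 = -c p} := by
    exact measurableSet_eq_fun ((hΦmeas.comp measurable_fst).add
      (hΦcmeas.comp measurable_snd)) hc.measurable.neg
  -- key: equality of integral with J iff supported on equality set
  have hkey : ∫ p, c p ∂γ = J ↔ γ {p : X × Y | Φ p.1 + Φc p.2 = -c p} = 1 := by
    rw [prob_compl_eq_zero_iff hset |>.symm]
    have h0 : ∫ p, c p ∂γ = J ↔ ∫ p, f p ∂γ = 0 := by rw [hfeq]; constructor <;> intro h <;> linarith
    rw [h0, integral_eq_zero_iff_of_nonneg (fun p => hpt p) hfint]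
    constructor
    · intro h
      rw [measure_eq_zero_iff_ae_notMem]
      filter_upwards [h] with p hp
      simp only [Set.mem_compl_iff, Set.mem_setOf_eq, not_not]
      have hp0 : c p + Φ p.1 + Φc p.2 = 0 := hp
      linarith
    · intro h
      have : ∀ᵐ p ∂γ, p ∈ {p : X × Y | Φ p.1 + Φc p.2 = -c p} := by
        rw [ae_iff]
        convert h using 2
        rfl
      filter_upwards [this] with p hp
      have hp' : Φ p.1 + Φc p.2 = -c p := hp
      show c p + Φ p.1 + Φc p.2 = (0 : X × Y → ℝ) p
      simp only [Pi.zero_apply]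
      linarith [hp']
  constructor
  · intro hopt
    have hlb : ∫ p, c p ∂γ ≤ J := by
      apply hstrong.2
      rintro r ⟨γ', h1, h2, h3, rfl⟩
      exact hopt γ' h1 h2 h3
    exact hkey.mp (le_antisymm hlb hJle)
  · intro hsupp γ' h1 h2 h3
    rw [hkey.mpr hsupp]
    exact hstrong.1 ⟨γ', h1, h2, h3, rfl⟩
end

section
/- On a compact Hessian manifold (X,∇,g), let Ω be the universal cover with pulled-back structure, Φ : Ω → ℝ a global potential with ∇dΦ = g, and γ : [0,1) → Ω a maximal affine geodesic segment. Then d/dt Φ(γ(t)) → +∞ as t → 1. -/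
set_option maxHeartbeats 1000000


open Filter Set Metric

/-- On a compact Hessian manifold, realized via its universal cover as a convex domain
`Ω ⊆ ℝ^d` with a smooth strictly convex potential `Φ` (with `∇dΦ = g`), invariant up to
affine functions under a group `G` of affine transformations acting cocompactly on `Ω`:
if `γ(t) = x + t•v`, `t ∈ [0,1)`, is a maximal affine geodesic segment in `Ω`, then
`d/dt Φ(γ(t)) → +∞` as `t → 1`. -/
theorem deriv_potential_tendsto_atTop_of_maximal_geodesic {d : ℕ}
    (Ω : Set (EuclideanSpace ℝ (Fin d)))
    (hΩo : IsOpen Ω) (hΩc : Convex ℝ Ω) (hΩne : Ω.Nonempty)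
    (Φ : EuclideanSpace ℝ (Fin d) → ℝ)
    (hsm : ContDiffOn ℝ (⊤ : ℕ∞) Φ Ω) (hconv : StrictConvexOn ℝ Ω Φ)
    (G : Subgroup (EuclideanSpace ℝ (Fin d) ≃ᵃ[ℝ] EuclideanSpace ℝ (Fin d)))
    -- `G` preserves `Ω`
    (hGΩ : ∀ g ∈ G, (g : EuclideanSpace ℝ (Fin d) ≃ᵃ[ℝ] EuclideanSpace ℝ (Fin d)) '' Ω = Ω)
    -- the Hessian metric `∇dΦ` is `G`-invariant: `Φ ∘ g − Φ` is affine for `g ∈ G`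
    (hGΦ : ∀ g ∈ G, ∃ a : EuclideanSpace ℝ (Fin d) →ᵃ[ℝ] ℝ,
      ∀ x ∈ Ω, Φ (g x) = Φ x + a x)
    -- the quotient `X = Ω/G` is compact: `G` acts cocompactly on `Ω`
    (hcocompact : ∃ K : Set (EuclideanSpace ℝ (Fin d)), IsCompact K ∧ K ⊆ Ω ∧
      Ω ⊆ ⋃ g ∈ G, (g : EuclideanSpace ℝ (Fin d) ≃ᵃ[ℝ] EuclideanSpace ℝ (Fin d)) '' K)
    -- a maximal affine geodesic segment `γ(t) = x + t•v`, `t ∈ [0,1)`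
    (x v : EuclideanSpace ℝ (Fin d))
    (hseg : ∀ t ∈ Set.Ico (0 : ℝ) 1, x + t • v ∈ Ω)
    (hmax : x + v ∉ Ω) :
    Tendsto (fun t : ℝ => deriv (fun s : ℝ => Φ (x + s • v)) t) (nhdsWithin (1 : ℝ) (Set.Iio 1)) atTop := by
  classical
  obtain ⟨K, hKc, hKΩ, hcover⟩ := hcocompact
  -- `v ≠ 0`
  have hv : v ≠ 0 := by
    intro h
    apply hmax
    have h0 := hseg 0 ⟨le_refl 0, zero_lt_one⟩
    simpa [h] using h0
  -- `K` is nonempty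
  have hKne : K.Nonempty := by
    rcases hΩne with ⟨y, hy⟩
    have hy' := hcover hy
    simp only [Set.mem_iUnion, Set.mem_image] at hy'
    obtain ⟨g, -, k, hk, -⟩ := hy'
    exact ⟨k, hk⟩
  -- a compact thickening of `K` inside `Ω`
  obtain ⟨r, hr0, hrK⟩ := hKc.exists_cthickening_subset_open hΩo hKΩ
  -- basic facts about `Φ`
  have hΦc : ContinuousOn Φ Ω := hsm.continuousOn
  have hΦd : ∀ p ∈ Ω, DifferentiableAt ℝ Φ p := fun p hp =>
    (hsm.contDiffAt (hΩo.mem_nhds hp)).differentiableAt (by simp)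
  -- the curve
  have hγd : Differentiable ℝ (fun s : ℝ => x + s • v) :=
    (differentiable_id.smul_const v).const_add x
  have hγc : Continuous (fun s : ℝ => x + s • v) := hγd.continuous
  -- the function along the curve
  set f : ℝ → ℝ := fun s : ℝ => Φ (x + s • v) with hfdef
  have hfd : ∀ t ∈ Set.Ico (0:ℝ) 1, DifferentiableAt ℝ f t := by
    intro t ht
    rw [hfdef]
    exact (hΦd _ (hseg t ht)).comp t (hγd t)
  -- convexity of `f` on `[0,1)`
  have hfconv : ConvexOn ℝ (Set.Ico (0:ℝ) 1) f := by
    have hAs : ∀ s : ℝ, AffineMap.lineMap x (x + v) s = x + s • v := by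
      intro s
      rw [AffineMap.lineMap_apply]
      simp only [vsub_eq_sub, vadd_eq_add, add_sub_cancel_left]
      exact add_comm _ _
    have h1 : ConvexOn ℝ (AffineMap.lineMap x (x + v) ⁻¹' Ω)
        (Φ ∘ AffineMap.lineMap x (x + v)) := hconv.convexOn.comp_affineMap _
    have h2 : ConvexOn ℝ (Set.Ico (0:ℝ) 1) (Φ ∘ AffineMap.lineMap x (x + v)) :=
      h1.subset (fun t ht => by
        simp only [Set.mem_preimage, hAs]
        exact hseg t ht) (convex_Ico 0 1)
    have heq : f = Φ ∘ AffineMap.lineMap x (x + v) := by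
      funext s
      simp only [hfdef, Function.comp_apply, hAs]
    rwa [heq]
  have hmono : MonotoneOn (deriv f) (Set.Ico (0:ℝ) 1) := hfconv.monotoneOn_deriv hfd
  -- the midpoint-convexity gap of `Φ`
  set gap : EuclideanSpace ℝ (Fin d) → EuclideanSpace ℝ (Fin d) → ℝ :=
    fun p q => (Φ p + Φ q) / 2 - Φ (midpoint ℝ p q) with hgapdef
  have hmidΩ : ∀ p ∈ Ω, ∀ q ∈ Ω, midpoint ℝ p q ∈ Ω := fun p hp q hq =>
    hΩc.segment_subset hp hq (midpoint_mem_segment p q)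
  have hhalf : (midpoint ℝ : EuclideanSpace ℝ (Fin d) → _ → _) =
      fun p q => (1/2 : ℝ) • p + (1/2 : ℝ) • q := by
    funext p q
    rw [midpoint_eq_smul_add, invOf_eq_inv, smul_add]
    norm_num
  have hgappos : ∀ p ∈ Ω, ∀ q ∈ Ω, p ≠ q → 0 < gap p q := by
    intro p hp q hq hne
    have h := hconv.2 hp hq hne (by norm_num : (0:ℝ) < 1/2) (by norm_num : (0:ℝ) < 1/2)
      (by norm_num)
    simp only [smul_eq_mul] at h
    simp only [hgapdef, hhalf]
    linarith
  -- gap is `G`-invariant on `Ω`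
  have hgapinv : ∀ g ∈ G, ∀ p ∈ Ω, ∀ q ∈ Ω,
      gap ((g : EuclideanSpace ℝ (Fin d) ≃ᵃ[ℝ] EuclideanSpace ℝ (Fin d)) p) (g q) = gap p q := by
    intro g hg p hp q hq
    obtain ⟨a, ha⟩ := hGΦ g hg
    have hmid := hmidΩ p hp q hq
    have e1 : (g : EuclideanSpace ℝ (Fin d) ≃ᵃ[ℝ] EuclideanSpace ℝ (Fin d)) (midpoint ℝ p q)
        = midpoint ℝ (g p) (g q) := g.map_midpoint p q
    have e2 : a (midpoint ℝ p q) = (a p + a q) / 2 := by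
      rw [a.map_midpoint, midpoint_eq_smul_add, invOf_eq_inv, smul_eq_mul]
      ring
    simp only [hgapdef]
    rw [ha p hp, ha q hq, ← e1, ha _ hmid, e2]
    ring
  -- gap along the segment in terms of `f`
  have hγmid : ∀ s s' : ℝ,
      midpoint ℝ (x + s • v) (x + s' • v) = x + ((s + s')/2) • v := by
    intro s s'
    rw [midpoint_eq_smul_add, invOf_eq_inv]
    module
  have hgapf : ∀ s s' : ℝ, gap (x + s • v) (x + s' • v) = (f s + f s')/2 - f ((s + s')/2) := by
    intro s s'
    simp only [hgapdef, hγmid, hfdef]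
  -- the compact set of pairs at distance exactly `r` with first coordinate in `K`
  set T : Set (EuclideanSpace ℝ (Fin d) × EuclideanSpace ℝ (Fin d)) :=
    {pq | pq.1 ∈ K ∧ ‖pq.2 - pq.1‖ = r} with hTdef
  have hTsub : T ⊆ K ×ˢ Metric.cthickening r K := by
    rintro ⟨p, q⟩ ⟨hp, hq⟩
    refine ⟨hp, ?_⟩
    exact Metric.mem_cthickening_of_dist_le q p r K hp (by rw [dist_eq_norm]; exact le_of_eq hq)
  have hTΩ : ∀ pq ∈ T, pq.1 ∈ Ω ∧ pq.2 ∈ Ω := fun pq h =>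
    ⟨hKΩ (hTsub h).1, hrK (hTsub h).2⟩
  have hTc : IsCompact T := by
    refine (hKc.prod hKc.cthickening).of_isClosed_subset ?_ hTsub
    have h1 : IsClosed {pq : EuclideanSpace ℝ (Fin d) × EuclideanSpace ℝ (Fin d) | pq.1 ∈ K} :=
      hKc.isClosed.preimage continuous_fst
    have h2 : IsClosed {pq : EuclideanSpace ℝ (Fin d) × EuclideanSpace ℝ (Fin d) |
        ‖pq.2 - pq.1‖ = r} :=
      isClosed_eq ((continuous_snd.sub continuous_fst).norm) continuous_const
    exact h1.inter h2
  have hTne : T.Nonempty := by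
    obtain ⟨k₀, hk₀⟩ := hKne
    have hnv : ‖v‖ ≠ 0 := norm_ne_zero_iff.2 hv
    refine ⟨(k₀, k₀ + (r / ‖v‖) • v), hk₀, ?_⟩
    rw [add_sub_cancel_left, norm_smul, Real.norm_eq_abs, abs_div, abs_of_pos hr0, abs_norm,
      div_mul_cancel₀ _ hnv]
  have hgc : ContinuousOn (fun pq : EuclideanSpace ℝ (Fin d) × EuclideanSpace ℝ (Fin d) =>
      gap pq.1 pq.2) T := by
    have hm : Continuous (fun pq : EuclideanSpace ℝ (Fin d) × EuclideanSpace ℝ (Fin d) =>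
        midpoint ℝ pq.1 pq.2) := by
      simp only [hhalf]
      exact (((continuous_fst : Continuous (fun pq : EuclideanSpace ℝ (Fin d) × EuclideanSpace ℝ (Fin d) => pq.1)).const_smul (1/2 : ℝ)).add
        ((continuous_snd : Continuous (fun pq : EuclideanSpace ℝ (Fin d) × EuclideanSpace ℝ (Fin d) => pq.2)).const_smul (1/2 : ℝ)))
    simp only [hgapdef]
    refine ContinuousOn.sub (ContinuousOn.div_const (ContinuousOn.add ?_ ?_) 2) ?_
    · exact hΦc.comp continuous_fst.continuousOn (fun pq h => (hTΩ pq h).1)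
    · exact hΦc.comp continuous_snd.continuousOn (fun pq h => (hTΩ pq h).2)
    · exact hΦc.comp hm.continuousOn (fun pq h => hmidΩ _ (hTΩ pq h).1 _ (hTΩ pq h).2)
  obtain ⟨pq₀, hpq₀, hmin⟩ := hTc.exists_isMinOn hTne hgc
  set m₀ : ℝ := gap pq₀.1 pq₀.2 with hm₀def
  have hm₀pos : 0 < m₀ := by
    refine hgappos _ (hTΩ _ hpq₀).1 _ (hTΩ _ hpq₀).2 ?_
    intro h
    have := hpq₀.2
    rw [← h, sub_self, norm_zero] at this
    exact hr0.ne this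
  -- key claim: the derivative is unbounded
  have key : ∀ M : ℝ, ∃ t₀ ∈ Set.Ioo (0:ℝ) 1, M ≤ deriv f t₀ := by
    intro M
    by_contra hcon
    push_neg at hcon
    set m : ℝ := deriv f (1/2) with hmdef
    set B : ℝ := max (M - m) 1 with hBdef
    have hB0 : (0:ℝ) < B := lt_of_lt_of_le one_pos (le_max_right _ _)
    set t : ℝ := max (3/4 : ℝ) (1 - 2 * m₀ / B) with htdef
    have ht34 : (3/4 : ℝ) ≤ t := le_max_left _ _
    have ht0 : (0:ℝ) < t := by linarith
    have hm₀B : 0 < 2 * m₀ / B := by positivity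
    have ht1 : t < 1 := by
      rw [htdef]
      exact max_lt (by norm_num) (by linarith)
    have htK : 1 - t ≤ 2 * m₀ / B := by
      have := le_max_right (3/4 : ℝ) (1 - 2 * m₀ / B)
      rw [← htdef] at this
      linarith
    have hBt : B * (1 - t) ≤ 2 * m₀ := by
      have h := mul_le_mul_of_nonneg_left htK hB0.le
      rwa [mul_div_cancel₀ _ hB0.ne'] at h
    have htI : t ∈ Set.Ico (0:ℝ) 1 := ⟨ht0.le, ht1⟩
    -- gap bound along the segment
    have hgapb : ∀ s' ∈ Set.Ioo t 1, gap (x + t • v) (x + s' • v) < m₀ := by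
      intro s' hs'
      obtain ⟨hts', hs'1⟩ := hs'
      have hmid1 : (t + s')/2 < 1 := by linarith
      have htmid : t < (t + s')/2 := by linarith
      have hmids' : (t + s')/2 < s' := by linarith
      have hmidI : (t + s')/2 ∈ Set.Ico (0:ℝ) 1 := ⟨by linarith, hmid1⟩
      have hs'I : s' ∈ Set.Ico (0:ℝ) 1 := ⟨by linarith, hs'1⟩
      have hhalfI : (1/2:ℝ) ∈ Set.Ico (0:ℝ) 1 := by norm_num
      have h1 : slope f ((t + s')/2) s' ≤ deriv f s' :=
        hfconv.slope_le_deriv hmidI hs'I hmids' (hfd _ hs'I)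
      have h2 : deriv f s' < M := hcon s' ⟨by linarith, hs'1⟩
      have h3 : deriv f t ≤ slope f t ((t + s')/2) :=
        hfconv.deriv_le_slope htI hmidI htmid (hfd _ htI)
      have h4 : m ≤ deriv f t := hmono hhalfI htI (by linarith)
      rw [slope_def_field] at h1 h3
      have hpos1 : (0:ℝ) < s' - (t + s')/2 := by linarith
      have hpos2 : (0:ℝ) < (t + s')/2 - t := by linarith
      have h5 : f s' - f ((t + s')/2) ≤ M * ((s' - t)/2) := by
        have hh : (f s' - f ((t + s')/2)) / (s' - (t + s')/2) ≤ M := h1.trans h2.le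
        have := mul_le_mul_of_nonneg_right hh hpos1.le
        rw [div_mul_cancel₀ _ hpos1.ne'] at this
        calc f s' - f ((t + s')/2) ≤ M * (s' - (t + s')/2) := this
          _ = M * ((s' - t)/2) := by ring
      have h6 : m * ((s' - t)/2) ≤ f ((t + s')/2) - f t := by
        have hh : m ≤ (f ((t + s')/2) - f t) / ((t + s')/2 - t) := h4.trans h3
        have := mul_le_mul_of_nonneg_right hh hpos2.le
        rw [div_mul_cancel₀ _ hpos2.ne'] at this
        calc m * ((s' - t)/2) = m * ((t + s')/2 - t) := by ring
          _ ≤ f ((t + s')/2) - f t := this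
      have hMa : M - m ≤ B := le_max_left _ _
      have hst0 : (0:ℝ) < s' - t := by linarith
      have e1 : (M - m) * (s' - t) ≤ B * (s' - t) := mul_le_mul_of_nonneg_right hMa hst0.le
      have e2 : B * (s' - t) ≤ B * (1 - t) := by
        exact mul_le_mul_of_nonneg_left (by linarith) hB0.le
      rw [hgapf]
      clear_value t B m m₀ f gap
      linarith [h5, h6, e1, e2, hBt, hm₀pos]
    -- pick the covering group element at time `t`
    have hγt : x + t • v ∈ Ω := hseg t htI
    have hccov := hcover hγt
    simp only [Set.mem_iUnion, Set.mem_image] at hccov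
    obtain ⟨g, hgG, k, hkK, hgk⟩ := hccov
    have hsymmΩ : ∀ y ∈ Ω, g.symm y ∈ Ω := by
      intro y hy
      have h := hGΩ g⁻¹ (inv_mem hgG)
      rw [← h]
      refine ⟨y, hy, ?_⟩
      rw [AffineEquiv.inv_def]
    have hqt : g.symm (x + t • v) = k := by
      rw [← hgk, g.symm_apply_apply]
    have hqc : Continuous (fun s : ℝ => g.symm (x + s • v)) :=
      g.symm.continuous_of_finiteDimensional.comp hγc
    -- the pulled-back curve stays in the ball of radius `r` around `k`
    have hball : ∀ s ∈ Set.Ico t 1, ‖g.symm (x + s • v) - k‖ ≤ r := by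
      by_contra hcon2
      push_neg at hcon2
      obtain ⟨s₁, hs₁, hs₁r⟩ := hcon2
      have hcq : ContinuousOn (fun s : ℝ => ‖g.symm (x + s • v) - k‖) (Set.Icc t s₁) :=
        ((hqc.sub continuous_const).norm).continuousOn
      have hr' : r ∈ Set.Icc ‖g.symm (x + t • v) - k‖ ‖g.symm (x + s₁ • v) - k‖ := by
        rw [hqt, sub_self, norm_zero]
        exact ⟨hr0.le, hs₁r.le⟩
      obtain ⟨s₀, hs₀mem, hs₀⟩ := intermediate_value_Icc hs₁.1 hcq hr'
      have hs₀' : ‖g.symm (x + s₀ • v) - k‖ = r := hs₀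
      have hts₀ : t < s₀ := by
        rcases eq_or_lt_of_le hs₀mem.1 with h | h
        · exfalso
          rw [← h, hqt, sub_self, norm_zero] at hs₀'
          exact hr0.ne hs₀'
        · exact h
      have hs₀1 : s₀ < 1 := lt_of_le_of_lt hs₀mem.2 hs₁.2
      have hs₀I : s₀ ∈ Set.Ico (0:ℝ) 1 := ⟨by linarith, hs₀1⟩
      have hqs₀Ω : g.symm (x + s₀ • v) ∈ Ω := hsymmΩ _ (hseg s₀ hs₀I)
      have hTmem : (k, g.symm (x + s₀ • v)) ∈ T := ⟨hkK, hs₀'⟩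
      have hge : m₀ ≤ gap k (g.symm (x + s₀ • v)) := isMinOn_iff.1 hmin _ hTmem
      have heq : gap (x + t • v) (x + s₀ • v) = gap k (g.symm (x + s₀ • v)) := by
        have hinv := hgapinv g hgG k (hKΩ hkK) (g.symm (x + s₀ • v)) hqs₀Ω
        rw [← hinv, hgk, g.apply_symm_apply]
      have hlt := hgapb s₀ ⟨hts₀, hs₀1⟩
      rw [heq] at hlt
      exact absurd hge (not_le.2 hlt)
    -- hence the curve stays in a compact subset of `Ω`, contradicting maximality
    have hCc : IsCompact ((g : EuclideanSpace ℝ (Fin d) ≃ᵃ[ℝ] EuclideanSpace ℝ (Fin d)) ''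
        Metric.closedBall k r) :=
      (isCompact_closedBall k r).image g.continuous_of_finiteDimensional
    have hγtend : Tendsto (fun s : ℝ => x + s • v) (nhdsWithin (1:ℝ) (Set.Iio 1))
        (nhds (x + v)) := by
      have h := hγc.tendsto 1
      rw [show x + (1:ℝ) • v = x + v by rw [one_smul]] at h
      exact h.mono_left nhdsWithin_le_nhds
    have hev : ∀ᶠ s in nhdsWithin (1:ℝ) (Set.Iio 1),
        (x + s • v) ∈ (g : EuclideanSpace ℝ (Fin d) ≃ᵃ[ℝ] EuclideanSpace ℝ (Fin d)) ''
          Metric.closedBall k r := by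
      filter_upwards [Ico_mem_nhdsLT_of_mem (⟨ht1, le_refl 1⟩ : (1:ℝ) ∈ Set.Ioc t 1)] with s hs
      exact ⟨g.symm (x + s • v), by
        rw [Metric.mem_closedBall, dist_eq_norm]
        exact hball s hs, g.apply_symm_apply _⟩
    have hxv : x + v ∈ (g : EuclideanSpace ℝ (Fin d) ≃ᵃ[ℝ] EuclideanSpace ℝ (Fin d)) ''
        Metric.closedBall k r := hCc.isClosed.mem_of_tendsto hγtend hev
    obtain ⟨y, hy, hgy⟩ := hxv
    have hyΩ : y ∈ Ω := hrK (Metric.mem_cthickening_of_dist_le y k r K hkK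
      (by rwa [Metric.mem_closedBall] at hy))
    have : x + v ∈ Ω := by
      rw [← hGΩ g hgG]
      exact ⟨y, hyΩ, hgy⟩
    exact hmax this
  -- conclude: monotone and unbounded derivative tends to `+∞`
  refine tendsto_atTop.2 fun M => ?_
  obtain ⟨t₀, ht₀, hM⟩ := key M
  filter_upwards [Ioo_mem_nhdsLT_of_mem (⟨ht₀.2, le_refl 1⟩ : (1:ℝ) ∈ Set.Ioc t₀ 1)] with s hs
  exact hM.trans (hmono ⟨ht₀.1.le, ht₀.2⟩ ⟨(ht₀.1.trans hs.1).le, hs.2⟩ hs.1.le)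
end

section
/- Let Φ : Ω → ℝ be a smooth strictly convex proper function on an open convex set Ω ⊆ ℝ^d which extends to a lower semi-continuous convex function on ℝ^d (equal to +∞ outside the closure of Ω), and let Φ' : Ω → ℝ be another such function with Φ − Φ' bounded on Ω. Then ∂Φ(Ω) = ∂Φ'(Ω). -/
open scoped RealInnerProductSpace
open Filter Topology Set

section helpers

variable {E : Type*} [NormedAddCommGroup E] [InnerProductSpace ℝ E] [CompleteSpace E]

/-- First-order condition: a convex differentiable function lies above its tangent plane. -/
lemma grad_tangent_le {s : Set E} {f : E → ℝ} (hconv : ConvexOn ℝ s f) {x y : E}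
    (hx : x ∈ s) (hgrad : HasGradientAt f y x) {z : E} (hz : z ∈ s) :
    f x + ⟪y, z - x⟫ ≤ f z := by
  rcases eq_or_ne z x with rfl | hne
  · simp
  · set v := z - x with hv
    have hc : HasDerivAt (fun t : ℝ => x + t • v) v 0 := by
      simpa using ((hasDerivAt_id (0 : ℝ)).smul_const v).const_add x
    have hφ : HasDerivAt (fun t : ℝ => f (x + t • v)) ⟪y, v⟫ 0 := by
      simpa [Function.comp_def, InnerProductSpace.toDual_apply_apply] using
        hgrad.hasFDerivAt.comp_hasDerivAt_of_eq 0 hc (by simp)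
    have hslope : ∀ t ∈ Set.Ioo (0 : ℝ) 1,
        slope (fun t : ℝ => f (x + t • v)) 0 t ≤ f z - f x := by
      intro t ht
      have ht0 : (0 : ℝ) < t := ht.1
      have hmem : x + t • v = (1 - t) • x + t • z := by rw [hv]; module
      have hcc : f (x + t • v) ≤ (1 - t) * f x + t * f z := by
        rw [hmem]; exact hconv.2 hx hz (by linarith [ht.2]) ht0.le (by ring)
      have hs : slope (fun t : ℝ => f (x + t • v)) 0 t = (f (x + t • v) - f x) / t := by
        simp [slope_def_field]
      rw [hs, div_le_iff₀ ht0]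
      nlinarith
    have htend : Tendsto (slope (fun t : ℝ => f (x + t • v)) 0) (𝓝[>] (0 : ℝ)) (𝓝 ⟪y, v⟫) :=
      (hasDerivAt_iff_tendsto_slope.mp hφ).mono_left
        (nhdsWithin_mono _ (fun t ht => ne_of_gt ht))
    have hle : ⟪y, v⟫ ≤ f z - f x :=
      le_of_tendsto htend
        (Filter.mem_of_superset (Ioo_mem_nhdsGT_of_mem (by norm_num : (0:ℝ) ∈ Set.Ico (0:ℝ) 1))
          hslope)
    linarith

/-- If `x ↦ f x - ⟪y, x⟫` attains its minimum over an open set at an interior point where `f`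
has gradient `w`, then `w = y`. -/
lemma grad_eq_of_min {Ω : Set E} (hΩo : IsOpen Ω) {f : E → ℝ} {x y w : E} (hx : x ∈ Ω)
    (hgrad : HasGradientAt f w x)
    (hmin : ∀ z ∈ Ω, f x - ⟪y, x⟫ ≤ f z - ⟪y, z⟫) : w = y := by
  have hlin : HasFDerivAt (fun z : E => ⟪y, z⟫) (innerSL ℝ y) x :=
    (innerSL ℝ y).hasFDerivAt
  have hF : HasFDerivAt (fun z => f z - ⟪y, z⟫)
      ((InnerProductSpace.toDual ℝ E w : E →L[ℝ] ℝ) - innerSL ℝ y) x :=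
    hgrad.hasFDerivAt.sub hlin
  have hlm : IsLocalMin (fun z => f z - ⟪y, z⟫) x := by
    filter_upwards [hΩo.mem_nhds hx] with z hz using hmin z hz
  have h0 := hlm.hasFDerivAt_eq_zero hF
  have hinner : ⟪w - y, w - y⟫ = 0 := by
    have := congrFun (congrArg DFunLike.coe h0) (w - y)
    rw [inner_sub_left]
    simpa [InnerProductSpace.toDual_apply_apply, inner_sub_left] using this
  have : w - y = 0 := inner_self_eq_zero.mp hinner
  exact sub_eq_zero.mp this

end helpers

section main

variable {d : ℕ}

local notation "E" => EuclideanSpace ℝ (Fin d)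

set_option maxHeartbeats 1000000 in
/-- Transfer of attainment of the minimum of `Φ - ⟪y, ·⟫` from `Φ` to `Φ'`. -/
lemma attain_transfer {Ω : Set E} (hΩo : IsOpen Ω) (hΩc : Convex ℝ Ω)
    {Φ Φ' : E → ℝ} (hΦc : ContinuousOn Φ Ω) (hΦ'c : ContinuousOn Φ' Ω)
    (hconv : StrictConvexOn ℝ Ω Φ)
    (hproper : ∀ C : ℝ, IsCompact {x | x ∈ Ω ∧ Φ x ≤ C})
    {C : ℝ} (hbd : ∀ x ∈ Ω, |Φ x - Φ' x| ≤ C)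
    {y x₀ : E} (hx₀ : x₀ ∈ Ω)
    (hmin : ∀ z ∈ Ω, Φ x₀ - ⟪y, x₀⟫ ≤ Φ z - ⟪y, z⟫) :
    ∃ x₁ ∈ Ω, ∀ z ∈ Ω, Φ' x₁ - ⟪y, x₁⟫ ≤ Φ' z - ⟪y, z⟫ := by
  set F : E → ℝ := fun z => Φ z - ⟪y, z⟫ with hF
  set F' : E → ℝ := fun z => Φ' z - ⟪y, z⟫ with hF'
  set cp : ℝ := max (F x₀) (F' x₀ + C) with hcp
  have hx₀c : F x₀ ≤ cp := le_max_left _ _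
  have hip : ∀ (t : ℝ) (u : E), ⟪y, x₀ + t • u⟫ = ⟪y, x₀⟫ + t * ⟪y, u⟫ := by
    intro t u; rw [inner_add_right, real_inner_smul_right]
  -- no ray from x₀ stays in Ω with F bounded by cp
  have hray : ∀ u : E, u ≠ 0 →
      ¬ (∀ t : ℝ, 0 ≤ t → x₀ + t • u ∈ Ω ∧ F (x₀ + t • u) ≤ cp) := by
    intro u hu h
    have hmem : ∀ t : ℝ, 0 ≤ t → x₀ + t • u ∈ Ω := fun t ht => (h t ht).1
    have hge : ∀ t : ℝ, 0 ≤ t → F x₀ ≤ F (x₀ + t • u) := fun t ht =>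
      hmin _ (hmem t ht)
    have hle : ∀ s : ℝ, 0 < s → F (x₀ + s • u) ≤ F x₀ := by
      intro s hs
      have t1 : Tendsto (fun T : ℝ => s / T) atTop (𝓝 0) :=
        tendsto_const_nhds.div_atTop tendsto_id
      have t2 : Tendsto (fun T : ℝ => F x₀ + s / T * (cp - F x₀)) atTop (𝓝 (F x₀)) := by
        have h2 := (tendsto_const_nhds :
          Tendsto (fun _ : ℝ => F x₀) atTop (𝓝 (F x₀))).add (t1.mul_const (cp - F x₀))
        simpa using h2
      refine ge_of_tendsto t2 ?_
      filter_upwards [eventually_gt_atTop (max s 0)] with T hT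
      have hTs : s < T := lt_of_le_of_lt (le_max_left _ _) hT
      have hT0 : (0 : ℝ) < T := lt_of_le_of_lt (le_max_right _ _) hT
      have hl0 : 0 ≤ s / T := div_nonneg hs.le hT0.le
      have hl1 : s / T ≤ 1 := by rw [div_le_one hT0]; exact hTs.le
      have hcomb : x₀ + s • u = (1 - s / T) • x₀ + (s / T) • (x₀ + T • u) := by
        rw [smul_add, smul_smul, div_mul_cancel₀ _ hT0.ne']; module
      have hcc : Φ (x₀ + s • u) ≤ (1 - s / T) * Φ x₀ + (s / T) * Φ (x₀ + T • u) := by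
        rw [hcomb]
        exact hconv.convexOn.2 hx₀ (hmem T hT0.le) (by linarith) hl0 (by ring)
      have hFT : F (x₀ + T • u) ≤ cp := (h T hT0.le).2
      have hFT' : Φ (x₀ + T • u) ≤ cp + ⟪y, x₀⟫ + T * ⟪y, u⟫ := by
        have := hFT; simp only [hF, hip] at this; linarith
      have hmul := mul_le_mul_of_nonneg_left hFT' hl0
      have hexp : s / T * (cp + ⟪y, x₀⟫ + T * ⟪y, u⟫)
          = s / T * cp + s / T * ⟪y, x₀⟫ + s * ⟪y, u⟫ := by
        field_simp
      rw [hexp] at hmul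
      have hgoal : Φ (x₀ + s • u) - (⟪y, x₀⟫ + s * ⟪y, u⟫) ≤
          (Φ x₀ - ⟪y, x₀⟫) + s / T * (cp - (Φ x₀ - ⟪y, x₀⟫)) := by
        have hd1 : s / T * (cp - (Φ x₀ - ⟪y, x₀⟫))
            = s / T * cp - s / T * Φ x₀ + s / T * ⟪y, x₀⟫ := by ring
        have hd2 : (1 - s / T) * Φ x₀ = Φ x₀ - s / T * Φ x₀ := by ring
        linarith [hcc, hmul, hd1, hd2]
      have e1 : F (x₀ + s • u) = Φ (x₀ + s • u) - (⟪y, x₀⟫ + s * ⟪y, u⟫) := by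
        simp only [hF]; rw [hip]
      have e0 : F x₀ = Φ x₀ - ⟪y, x₀⟫ := rfl
      rw [e1, e0]
      exact hgoal
    have h1 : F (x₀ + (1 : ℝ) • u) = F x₀ := le_antisymm (hle 1 one_pos) (hge 1 zero_le_one)
    have h2 : F (x₀ + (2 : ℝ) • u) = F x₀ := le_antisymm (hle 2 two_pos) (hge 2 (by norm_num))
    have hne : x₀ ≠ x₀ + (2 : ℝ) • u := by
      intro hEq
      apply hu
      have : (2 : ℝ) • u = 0 := by
        have := hEq.symm; rwa [add_eq_left] at this
      simpa using this
    have hmid : x₀ + (1 : ℝ) • u = (1 / 2 : ℝ) • x₀ + (1 / 2 : ℝ) • (x₀ + (2 : ℝ) • u) := by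
      module
    have hsc : Φ (x₀ + (1 : ℝ) • u) < (1 / 2 : ℝ) * Φ x₀
        + (1 / 2 : ℝ) * Φ (x₀ + (2 : ℝ) • u) := by
      rw [hmid]
      exact hconv.2 hx₀ (hmem 2 (by norm_num)) hne (by norm_num) (by norm_num) (by norm_num)
    have e1 : F (x₀ + (1 : ℝ) • u) = Φ (x₀ + (1 : ℝ) • u) - (⟪y, x₀⟫ + 1 * ⟪y, u⟫) := by
      simp only [hF, hip]
    have e2 : F (x₀ + (2 : ℝ) • u) = Φ (x₀ + (2 : ℝ) • u) - (⟪y, x₀⟫ + 2 * ⟪y, u⟫) := by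
      simp only [hF, hip]
    have e0 : F x₀ = Φ x₀ - ⟪y, x₀⟫ := rfl
    linarith [h1, h2, hsc]
  -- the sublevel set {F ≤ cp} is bounded
  have hbddS : ∃ R : ℝ, ∀ x ∈ Ω, F x ≤ cp → ‖x - x₀‖ ≤ R := by
    by_contra hun
    push_neg at hun
    choose X hXΩ hXF hXn using fun n : ℕ => hun n
    have hXpos : ∀ n : ℕ, (n : ℝ) < ‖X n - x₀‖ := hXn
    have hX0 : ∀ n : ℕ, (0 : ℝ) < ‖X n - x₀‖ := fun n =>
      lt_of_le_of_lt (Nat.cast_nonneg n) (hXpos n)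
    set uu : ℕ → E := fun n => ‖X n - x₀‖⁻¹ • (X n - x₀) with huu
    have huusph : ∀ n, uu n ∈ Metric.sphere (0 : E) 1 := by
      intro n
      rw [mem_sphere_zero_iff_norm, huu]
      rw [norm_smul, norm_inv, norm_norm, inv_mul_cancel₀ (hX0 n).ne']
    obtain ⟨u, husph, φ, hφmono, hφtend⟩ :=
      (isCompact_sphere (0 : E) 1).tendsto_subseq huusph
    have hu0 : u ≠ 0 := by
      intro h0
      rw [h0, mem_sphere_zero_iff_norm, norm_zero] at husph
      norm_num at husph
    refine hray u hu0 ?_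
    intro t ht
    rcases eq_or_lt_of_le ht with rfl | htpos
    · simpa using ⟨hx₀, hx₀c⟩
    -- points along the subsequence
    set z : ℕ → E := fun n => x₀ + t • uu (φ n) with hz
    have hztend : Tendsto z atTop (𝓝 (x₀ + t • u)) :=
      tendsto_const_nhds.add (hφtend.const_smul t)
    obtain ⟨N, hN⟩ := exists_nat_ge t
    have hkey : ∀ n : ℕ, N ≤ n → z n ∈ Ω ∧ F (z n) ≤ cp := by
      intro n hn
      have hlen : t ≤ ‖X (φ n) - x₀‖ := by
        calc t ≤ (N : ℝ) := hN
        _ ≤ (n : ℝ) := by exact_mod_cast hn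
        _ ≤ (φ n : ℝ) := by exact_mod_cast hφmono.le_apply
        _ ≤ ‖X (φ n) - x₀‖ := (hXpos (φ n)).le
      set lam : ℝ := t / ‖X (φ n) - x₀‖ with hlam
      have hl0 : 0 < lam := div_pos htpos (hX0 (φ n))
      have hl1 : lam ≤ 1 := by
        rw [hlam, div_le_one (hX0 (φ n))]; exact hlen
      have hcomb : z n = (1 - lam) • x₀ + lam • X (φ n) := by
        show x₀ + t • (‖X (φ n) - x₀‖⁻¹ • (X (φ n) - x₀)) = _
        rw [hlam, div_eq_mul_inv]
        match_scalars <;> ring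
      constructor
      · rw [hcomb]
        exact hΩc (hx₀) (hXΩ (φ n)) (by linarith) hl0.le (by ring)
      · have hcc : Φ (z n) ≤ (1 - lam) * Φ x₀ + lam * Φ (X (φ n)) := by
          rw [hcomb]
          exact hconv.convexOn.2 hx₀ (hXΩ (φ n)) (by linarith) hl0.le (by ring)
        have hipz : ⟪y, z n⟫ = (1 - lam) * ⟪y, x₀⟫ + lam * ⟪y, X (φ n)⟫ := by
          rw [hcomb, inner_add_right, real_inner_smul_right, real_inner_smul_right]
        have hFx : Φ x₀ - ⟪y, x₀⟫ ≤ cp := hx₀c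
        have hFX : Φ (X (φ n)) - ⟪y, X (φ n)⟫ ≤ cp := hXF (φ n)
        have hm1 := mul_le_mul_of_nonneg_left hFx (by linarith : (0:ℝ) ≤ 1 - lam)
        have hm2 := mul_le_mul_of_nonneg_left hFX hl0.le
        simp only [hF]
        rw [hipz]
        nlinarith
    -- the limit point lies in Ω with F ≤ cp
    have hΦz : ∀ n : ℕ, N ≤ n → z n ∈ {x | x ∈ Ω ∧ Φ x ≤ cp + ‖y‖ * (‖x₀‖ + t)} := by
      intro n hn
      obtain ⟨hzΩ, hzF⟩ := hkey n hn
      refine ⟨hzΩ, ?_⟩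
      have h1 : ⟪y, z n⟫ ≤ ‖y‖ * ‖z n‖ := real_inner_le_norm y (z n)
      have h2 : ‖z n‖ ≤ ‖x₀‖ + t := by
        rw [hz]
        simp only
        refine le_trans (norm_add_le _ _) ?_
        rw [norm_smul, Real.norm_eq_abs, abs_of_pos htpos,
          mem_sphere_zero_iff_norm.mp (huusph (φ n)), mul_one]
      have h3 : ‖y‖ * ‖z n‖ ≤ ‖y‖ * (‖x₀‖ + t) :=
        mul_le_mul_of_nonneg_left h2 (norm_nonneg y)
      have : Φ (z n) - ⟪y, z n⟫ ≤ cp := hzF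
      linarith
    have hwK : x₀ + t • u ∈ {x | x ∈ Ω ∧ Φ x ≤ cp + ‖y‖ * (‖x₀‖ + t)} := by
      refine (hproper (cp + ‖y‖ * (‖x₀‖ + t))).isClosed.mem_of_tendsto hztend ?_
      filter_upwards [eventually_ge_atTop N] with n hn using hΦz n hn
    have hwΩ : x₀ + t • u ∈ Ω := hwK.1
    refine ⟨hwΩ, ?_⟩
    -- continuity of F within Ω at the limit
    have hFc : ContinuousOn F Ω := by
      apply hΦc.sub
      exact (Continuous.continuousOn (continuous_const.inner continuous_id))
    have hzin : Tendsto z atTop (𝓝[Ω] (x₀ + t • u)) := by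
      rw [tendsto_nhdsWithin_iff]
      refine ⟨hztend, ?_⟩
      filter_upwards [eventually_ge_atTop N] with n hn using (hkey n hn).1
    have hFtend : Tendsto (fun n => F (z n)) atTop (𝓝 (F (x₀ + t • u))) :=
      ((hFc (x₀ + t • u) hwΩ).tendsto).comp hzin
    refine le_of_tendsto hFtend ?_
    filter_upwards [eventually_ge_atTop N] with n hn using (hkey n hn).2
  -- wrap up: minimize F' over a compact sublevel set
  obtain ⟨R, hR⟩ := hbddS
  set M : ℝ := cp + ‖y‖ * (R + ‖x₀‖) with hM
  set K : Set E := {x | x ∈ Ω ∧ Φ x ≤ M} with hK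
  have hSK : ∀ x ∈ Ω, F x ≤ cp → x ∈ K := by
    intro x hx hxF
    refine ⟨hx, ?_⟩
    have h1 : ‖x‖ ≤ R + ‖x₀‖ := by
      calc ‖x‖ = ‖x - x₀ + x₀‖ := by congr 1; abel
      _ ≤ ‖x - x₀‖ + ‖x₀‖ := norm_add_le _ _
      _ ≤ R + ‖x₀‖ := by have := hR x hx hxF; linarith
    have h2 : ⟪y, x⟫ ≤ ‖y‖ * ‖x‖ := real_inner_le_norm y x
    have h3 : ‖y‖ * ‖x‖ ≤ ‖y‖ * (R + ‖x₀‖) := mul_le_mul_of_nonneg_left h1 (norm_nonneg y)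
    have : Φ x - ⟪y, x⟫ ≤ cp := hxF
    rw [hM]; linarith
  have hx₀K : x₀ ∈ K := hSK x₀ hx₀ hx₀c
  have hKc : IsCompact K := hproper M
  have hKΩ : K ⊆ Ω := fun x hx => hx.1
  have hF'c : ContinuousOn F' K := by
    apply ContinuousOn.mono _ hKΩ
    apply hΦ'c.sub
    exact (Continuous.continuousOn (continuous_const.inner continuous_id))
  obtain ⟨x₁, hx₁K, hx₁min⟩ := hKc.exists_isMinOn ⟨x₀, hx₀K⟩ hF'c
  rw [isMinOn_iff] at hx₁min
  refine ⟨x₁, hKΩ hx₁K, ?_⟩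
  intro zz hzz
  by_cases hzc : F' zz ≤ F' x₀
  · refine hx₁min zz (hSK zz hzz ?_)
    have habs := abs_le.mp (hbd zz hzz)
    have : F zz ≤ F' zz + C := by simp only [hF, hF']; linarith [habs.2]
    calc F zz ≤ F' zz + C := this
    _ ≤ F' x₀ + C := by linarith
    _ ≤ cp := le_max_right _ _
  · push_neg at hzc
    calc F' x₁ ≤ F' x₀ := hx₁min x₀ hx₀K
    _ ≤ F' zz := hzc.le

lemma gradient_image_subset {Ω : Set E} (hΩo : IsOpen Ω) (hΩc : Convex ℝ Ω)
    {Φ Φ' : E → ℝ} (hΦc : ContinuousOn Φ Ω) (hΦ'c : ContinuousOn Φ' Ω)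
    (hconv : StrictConvexOn ℝ Ω Φ)
    {g g' : E → E}
    (hg : ∀ x ∈ Ω, HasGradientAt Φ (g x) x)
    (hg' : ∀ x ∈ Ω, HasGradientAt Φ' (g' x) x)
    (hproper : ∀ C : ℝ, IsCompact {x | x ∈ Ω ∧ Φ x ≤ C})
    {C : ℝ} (hbd : ∀ x ∈ Ω, |Φ x - Φ' x| ≤ C) :
    g '' Ω ⊆ g' '' Ω := by
  rintro y ⟨x₀, hx₀, rfl⟩
  have hmin : ∀ z ∈ Ω, Φ x₀ - ⟪g x₀, x₀⟫ ≤ Φ z - ⟪g x₀, z⟫ := by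
    intro z hz
    have h := grad_tangent_le hconv.convexOn hx₀ (hg x₀ hx₀) hz
    rw [inner_sub_right] at h
    linarith
  obtain ⟨x₁, hx₁, hmin'⟩ :=
    attain_transfer hΩo hΩc hΦc hΦ'c hconv hproper hbd hx₀ hmin
  exact ⟨x₁, hx₁, grad_eq_of_min hΩo hx₁ (hg' x₁ hx₁) hmin'⟩

end main


/-- Let `Φ, Φ' : Ω → ℝ` be smooth strictly convex proper functions on an open convex set
`Ω ⊆ ℝ^d` (so that they extend to lsc convex functions equal to `+∞` outside the closure
of `Ω`), with `Φ − Φ'` bounded on `Ω`. Then the images of the gradient maps agree: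
`∂Φ(Ω) = ∂Φ'(Ω)`. -/
theorem gradient_image_eq_of_bounded_difference {d : ℕ}
    (Ω : Set (EuclideanSpace ℝ (Fin d)))
    (hΩo : IsOpen Ω) (hΩc : Convex ℝ Ω) (hΩne : Ω.Nonempty)
    (Φ Φ' : EuclideanSpace ℝ (Fin d) → ℝ)
    (hsm : ContDiffOn ℝ (⊤ : ℕ∞) Φ Ω) (hsm' : ContDiffOn ℝ (⊤ : ℕ∞) Φ' Ω)
    (hconv : StrictConvexOn ℝ Ω Φ) (hconv' : StrictConvexOn ℝ Ω Φ')
    (g g' : EuclideanSpace ℝ (Fin d) → EuclideanSpace ℝ (Fin d))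
    (hg : ∀ x ∈ Ω, HasGradientAt Φ (g x) x)
    (hg' : ∀ x ∈ Ω, HasGradientAt Φ' (g' x) x)
    -- properness of `Φ` and `Φ'` on `Ω`
    (hproper : ∀ C : ℝ, IsCompact {x | x ∈ Ω ∧ Φ x ≤ C})
    (hproper' : ∀ C : ℝ, IsCompact {x | x ∈ Ω ∧ Φ' x ≤ C})
    -- `Φ − Φ'` is bounded on `Ω`
    (hbd : ∃ C : ℝ, ∀ x ∈ Ω, |Φ x - Φ' x| ≤ C) :
    g '' Ω = g' '' Ω := by
  obtain ⟨C, hC⟩ := hbd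
  have hC' : ∀ x ∈ Ω, |Φ' x - Φ x| ≤ C := fun x hx => by
    rw [abs_sub_comm]; exact hC x hx
  exact Set.Subset.antisymm
    (gradient_image_subset hΩo hΩc hsm.continuousOn hsm'.continuousOn hconv hg hg' hproper hC)
    (gradient_image_subset hΩo hΩc hsm'.continuousOn hsm.continuousOn hconv' hg' hg hproper' hC')
end

section
/- Let Δ be a reflexive polytope, μ_M and ν_N the parallel probability measures on ∂Δ and ∂Δ^∨ respectively. If ν_N is stable (the transport problem with cost c(m,n) = −⟨m,n⟩ admits an optimal plan supported on ⋃_σ σ° × Star(n_σ)°), then the volume estimates ν_N(τ) ≤ μ_M(Star(m_τ)) for every facet τ of Δ^∨ and μ_M(σ) ≤ ν_N(Star(n_σ)) for every facet σ of Δ hold. -/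
/-!
The coupling `γ` carries the `ν`-mass of `τ°` on `∂Δ × τ°`. Up to a `γ`-null set this lies in
`⋃_τ' Star(m_τ')° × τ'°`, and since the open facets `τ'°` are disjoint only `τ' = τ` contributes,
so the mass sits in `Star(m_τ)° × ∂Δ^∨`, whose `γ`-measure is `μ(Star(m_τ)°)`. The second estimate
is the same argument with the roles of the two factors exchanged.
-/

open MeasureTheory

namespace MeasureTheory

variable {Z X Y ι : Type*} [MeasurableSpace Z] [MeasurableSpace X] [MeasurableSpace Y]

/-- The set `S` need not be measurable, so `γ Sᶜ = 0` is not available; instead we compare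
`γ E + γ Eᶜ = γ S ≤ γ F + γ Eᶜ`. -/
lemma measure_le_of_inter_subset (γ : Measure Z) [IsFiniteMeasure γ] {S E F : Set Z}
    (hE : MeasurableSet E) (hS : γ S = γ Set.univ) (hSEF : S ∩ E ⊆ F) :
    γ E ≤ γ F := by
  have key : γ E + γ Eᶜ ≤ γ F + γ Eᶜ :=
    calc γ E + γ Eᶜ = γ S := by rw [measure_add_measure_compl hE, hS]
      _ ≤ γ (S ∩ E) + γ (S \ E) := measure_le_inter_add_sdiff γ S E
      _ ≤ γ F + γ Eᶜ := add_le_add (measure_mono hSEF) (measure_mono (Set.sdiff_subset_compl S E))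
  exact (ENNReal.add_le_add_iff_right (measure_ne_top γ _)).1 key

lemma map_apply_le_map_apply_of_measure_iUnion_eq_univ (γ : Measure Z) [IsFiniteMeasure γ]
    {f : Z → X} {g : Z → Y} (hf : AEMeasurable f γ) (hg : Measurable g)
    {A : ι → Set X} {B : ι → Set Y} (hB : ∀ i, MeasurableSet (B i))
    (hBdisj : Pairwise (Function.onFun Disjoint B))
    (hsupp : γ (⋃ i, f ⁻¹' A i ∩ g ⁻¹' B i) = γ Set.univ) (j : ι) :
    γ.map g (B j) ≤ γ.map f (A j) := by
  have hsub : (⋃ i, f ⁻¹' A i ∩ g ⁻¹' B i) ∩ g ⁻¹' B j ⊆ f ⁻¹' A j := by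
    rintro z ⟨hz, hzj⟩
    obtain ⟨i, hzA, hzB⟩ := Set.mem_iUnion.1 hz
    obtain rfl : i = j := hBdisj.eq (Set.not_disjoint_iff.2 ⟨g z, hzB, hzj⟩)
    exact hzA
  calc γ.map g (B j) = γ (g ⁻¹' B j) := Measure.map_apply hg (hB j)
    _ ≤ γ (f ⁻¹' A j) := measure_le_of_inter_subset γ (hg (hB j)) hsupp hsub
    _ ≤ γ.map f (A j) := Measure.le_map_apply hf (A j)

end MeasureTheory

theorem stability_implies_volume_estimates_general
    {X Y : Type*} [MeasurableSpace X] [MeasurableSpace Y] {ι ι' : Type*}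
    (μ : Measure X) (ν : Measure Y)
    (γ : Measure (X × Y)) [IsProbabilityMeasure γ]
    (hγ1 : γ.map Prod.fst = μ) (hγ2 : γ.map Prod.snd = ν)
    (A : ι' → Set X) (B : ι' → Set Y) (C : ι → Set X) (D : ι → Set Y)
    (hBmeas : ∀ τ, MeasurableSet (B τ))
    (hCmeas : ∀ σ, MeasurableSet (C σ))
    (hBdisj : Pairwise (Function.onFun Disjoint B))
    (hCdisj : Pairwise (Function.onFun Disjoint C))
    -- stability: an optimal plan `γ` is supported on `⋃_τ Star(m_τ)° × τ° = ⋃_σ σ° × Star(n_σ)°`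
    (hsuppτ : γ (⋃ τ, A τ ×ˢ B τ) = 1)
    (hsuppσ : γ (⋃ σ, C σ ×ˢ D σ) = 1) :
    (∀ τ, ν (B τ) ≤ μ (A τ)) ∧ (∀ σ, μ (C σ) ≤ ν (D σ)) := by
  subst hγ1 hγ2
  constructor
  · refine map_apply_le_map_apply_of_measure_iUnion_eq_univ γ measurable_fst.aemeasurable
      measurable_snd hBmeas hBdisj ?_
    simpa only [Set.prod_eq, measure_univ] using hsuppτ
  · refine map_apply_le_map_apply_of_measure_iUnion_eq_univ γ measurable_snd.aemeasurable
      measurable_fst hCmeas hCdisj ?_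
    simpa only [Set.prod_eq, Set.inter_comm, measure_univ] using hsuppσ

/-- Stability implies the volume estimates. Abstract formulation: `μ` and `ν` are the
parallel probability measures on `∂Δ` and `∂Δ^∨`; facets of `Δ^∨` are indexed by `ι'`,
with `A τ = Star(m_τ)°` and `B τ = τ°` (the `τ°` pairwise disjoint), and facets of `Δ`
are indexed by `ι`, with `C σ = σ°` (pairwise disjoint) and `D σ = Star(n_σ)°`. If `ν` is
stable, i.e. some coupling `γ` of `μ` and `ν` is supported on
`⋃_τ Star(m_τ)° × τ° = ⋃_σ σ° × Star(n_σ)°`, then `ν(τ°) ≤ μ(Star(m_τ)°)` for every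
facet `τ` of `Δ^∨` and `μ(σ°) ≤ ν(Star(n_σ)°)` for every facet `σ` of `Δ`. -/
theorem stability_implies_volume_estimates
    {X Y : Type*} [MeasurableSpace X] [MeasurableSpace Y] {ι ι' : Type*}
    (μ : Measure X) (ν : Measure Y) [IsProbabilityMeasure μ] [IsProbabilityMeasure ν]
    (γ : Measure (X × Y)) [IsProbabilityMeasure γ]
    (hγ1 : γ.map Prod.fst = μ) (hγ2 : γ.map Prod.snd = ν)
    (A : ι' → Set X) (B : ι' → Set Y) (C : ι → Set X) (D : ι → Set Y)
    (hAmeas : ∀ τ, MeasurableSet (A τ)) (hBmeas : ∀ τ, MeasurableSet (B τ))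
    (hCmeas : ∀ σ, MeasurableSet (C σ)) (hDmeas : ∀ σ, MeasurableSet (D σ))
    (hBdisj : Pairwise (Function.onFun Disjoint B))
    (hCdisj : Pairwise (Function.onFun Disjoint C))
    -- stability: an optimal plan `γ` is supported on `⋃_τ Star(m_τ)° × τ° = ⋃_σ σ° × Star(n_σ)°`
    (hsuppτ : γ (⋃ τ, A τ ×ˢ B τ) = 1)
    (hsuppσ : γ (⋃ σ, C σ ×ˢ D σ) = 1) :
    (∀ τ, ν (B τ) ≤ μ (A τ)) ∧ (∀ σ, μ (C σ) ≤ ν (D σ)) :=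
  stability_implies_volume_estimates_general μ ν γ hγ1 hγ2 A B C D hBmeas hCmeas hBdisj hCdisj
    hsuppτ hsuppσ
end
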